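/- For every integer n with n = 2 or n ≥ 4, there exists a connected graph G of order n such that χ_d^t(C(G)) = n. -/

import Mathlib

open SimpleGraph

/-- The central graph `C(G)`: subdivide each edge of `G` once (vertex `c_e` for each
edge `e`) and join all non-adjacent pairs of original vertices. -/
def centralGraph {V : Type*} (G : SimpleGraph V) : SimpleGraph (V ⊕ G.edgeSet) where
  Adj x y :=
    match x, y with
    | Sum.inl u, Sum.inl v => u ≠ v ∧ ¬ G.Adj u v
    | Sum.inl u, Sum.inr e => u ∈ (e : Sym2 V)
    | Sum.inr e, Sum.inl u => u ∈ (e : Sym2 V)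
    | Sum.inr _, Sum.inr _ => False
  symm := by
    constructor
    rintro (u | e) (v | f) h
    · exact ⟨h.1.symm, fun a => h.2 a.symm⟩
    · exact h
    · exact h
    · exact h
  loopless := by
    constructor
    rintro (u | e) h
    · exact h.1 rfl
    · exact h

/-- `f` is a total dominator coloring of `G`: a proper coloring such that every
vertex is adjacent to all vertices of some (nonempty) color class. -/
def IsTDColoring {V : Type*} (G : SimpleGraph V) (f : V → ℕ) : Prop :=
  (∀ u v, G.Adj u v → f u ≠ f v) ∧
  ∀ v, ∃ c, (∃ w, f w = c) ∧ ∀ w, f w = c → G.Adj v w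

/-- Total dominator chromatic number: minimum number of colors in a TDC. -/
noncomputable def tdcn {V : Type*} (G : SimpleGraph V) : ℕ :=
  sInf {k | ∃ f : V → ℕ, IsTDColoring G f ∧ ∀ v, f v < k}

/-- Total domination number. -/
noncomputable def tdn {V : Type*} (G : SimpleGraph V) : ℕ :=
  sInf {k | ∃ S : Set V, S.ncard = k ∧ ∀ v, ∃ u ∈ S, G.Adj v u}

/-- The join of two graphs. -/
def joinGraph {α β : Type*} (G : SimpleGraph α) (H : SimpleGraph β) :
    SimpleGraph (α ⊕ β) where
  Adj x y :=
    match x, y with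
    | Sum.inl u, Sum.inl v => G.Adj u v
    | Sum.inr u, Sum.inr v => H.Adj u v
    | Sum.inl _, Sum.inr _ => True
    | Sum.inr _, Sum.inl _ => True
  symm := ⟨by rintro (u | u) (v | v) h <;> first | exact h.symm | trivial⟩
  loopless := ⟨by rintro (u | u) h <;> exact h.ne rfl⟩

/-- The path graph on `n` vertices. -/
def pathG (n : ℕ) : SimpleGraph (Fin n) :=
  SimpleGraph.fromRel (fun i j => (i : ℕ) + 1 = (j : ℕ))

/-- The cycle graph on `n` vertices. -/
def cycleG (n : ℕ) : SimpleGraph (ZMod n) :=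
  SimpleGraph.fromRel (fun i j => i - j = 1)

/-- The double star `S_{1,n,n}`: center `0`, support vertices `1,...,n`
(adjacent to the center), each `i` with its own pendant `n+i`. -/
def doubleStar (n : ℕ) : SimpleGraph (Fin (2 * n + 1)) :=
  SimpleGraph.fromRel (fun a b =>
    ((a : ℕ) = 0 ∧ 1 ≤ (b : ℕ) ∧ (b : ℕ) ≤ n) ∨
    (1 ≤ (a : ℕ) ∧ (a : ℕ) ≤ n ∧ (b : ℕ) = (a : ℕ) + n))

/-- The disjoint union of a family of graphs. -/
def sigmaGraph {ι : Type*} {V : ι → Type*} (G : ∀ i, SimpleGraph (V i)) :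
    SimpleGraph (Σ i, V i) :=
  SimpleGraph.fromRel (fun x y =>
    ∃ (i : ι) (u v : V i), (G i).Adj u v ∧ x = ⟨i, u⟩ ∧ y = ⟨i, v⟩)

/-!
Take `G` the star with center `0` and leaves `1, …, n - 1`. In `C(G)` the leaves form a clique,
while the center is adjacent only to subdivision vertices, so the class it totally dominates is an
`n`-th color. Conversely, color leaf `i` by `i - 1`, the center like leaf `1`, and all subdivision
vertices by one new color: a subdivision vertex dominates the class of its leaf, the center the new
class, and a leaf the new class if `n = 2`, or else the singleton class of a leaf `j ∉ {1, i}`.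
-/

namespace SimpleGraph

variable {V : Type*}

@[simp]
lemma centralGraph_adj_inl_inl {G : SimpleGraph V} {u v : V} :
    (centralGraph G).Adj (.inl u) (.inl v) ↔ u ≠ v ∧ ¬ G.Adj u v := Iff.rfl

@[simp]
lemma centralGraph_adj_inl_inr {G : SimpleGraph V} {u : V} {e : G.edgeSet} :
    (centralGraph G).Adj (.inl u) (.inr e) ↔ u ∈ (e : Sym2 V) := Iff.rfl

@[simp]
lemma centralGraph_adj_inr_inl {G : SimpleGraph V} {u : V} {e : G.edgeSet} :
    (centralGraph G).Adj (.inr e) (.inl u) ↔ u ∈ (e : Sym2 V) := Iff.rfl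

lemma IsTDColoring.card_lt {G : SimpleGraph V} {f : V → ℕ} (hf : IsTDColoring G f) {k : ℕ}
    (hk : ∀ v, f v < k) {s : Finset V} (hs : G.IsClique (s : Set V)) {v : V}
    (hv : ∀ u ∈ s, ¬ G.Adj v u) : s.card < k := by
  obtain ⟨_, ⟨w, rfl⟩, hw⟩ := hf.2 v
  have hinj : Set.InjOn f s := fun a ha b hb hab => by
    by_contra hne
    exact hf.1 a b (hs ha hb hne) hab
  have hmaps : s.image f ⊆ (Finset.range k).erase (f w) := by
    simp only [Finset.subset_iff, Finset.mem_image, Finset.mem_erase, Finset.mem_range]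
    rintro _ ⟨u, hu, rfl⟩
    exact ⟨fun h => hv u hu (hw u h), hk u⟩
  calc s.card = (s.image f).card := (Finset.card_image_of_injOn hinj).symm
    _ ≤ ((Finset.range k).erase (f w)).card := Finset.card_le_card hmaps
    _ < k := by simpa using Finset.card_erase_lt_of_mem (Finset.mem_range.2 (hk w))

lemma centralGraph_starGraph_adj_inl_inl {r u v : V} :
    (centralGraph (starGraph r)).Adj (.inl u) (.inl v) ↔ u ≠ v ∧ u ≠ r ∧ v ≠ r := by
  simp only [centralGraph_adj_inl_inl, starGraph_adj]
  tauto

lemma nonempty_edgeSet_starGraph {r x : V} (h : x ≠ r) : Nonempty (starGraph r).edgeSet :=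
  ⟨⟨s(r, x), starGraph_adj.2 ⟨h.symm, .inl rfl⟩⟩⟩

lemma exists_eq_mk_of_mem_edgeSet_starGraph {r : V} {e : Sym2 V}
    (he : e ∈ (starGraph r).edgeSet) : ∃ x, x ≠ r ∧ e = s(r, x) := by
  induction e with
  | h u v =>
    obtain ⟨huv, rfl | rfl⟩ := starGraph_adj.1 he
    · exact ⟨v, huv.symm, rfl⟩
    · exact ⟨u, huv, Sym2.eq_swap⟩

lemma card_le_of_isTDColoring_centralGraph_starGraph [Fintype V] {r : V}
    {f : V ⊕ (starGraph r).edgeSet → ℕ} (hf : IsTDColoring (centralGraph (starGraph r)) f)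
    {k : ℕ} (hk : ∀ v, f v < k) : Fintype.card V ≤ k := by
  classical
  have hlt := hf.card_lt hk (s := (Finset.univ.erase r).map .inl) (v := .inl r)
    (by
      simp only [Finset.coe_map, Finset.coe_erase, Finset.coe_univ]
      rintro _ ⟨u, hu, rfl⟩ _ ⟨v, hv, rfl⟩ huv
      exact centralGraph_starGraph_adj_inl_inl.2 ⟨fun h => huv (h ▸ rfl), hu.2, hv.2⟩)
    (by
      simp only [Finset.mem_map, Function.Embedding.inl_apply]
      rintro _ ⟨u, -, rfl⟩ h
      exact (centralGraph_starGraph_adj_inl_inl.1 h).2.1 rfl)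
  rw [Finset.card_map, Finset.card_erase_of_mem (Finset.mem_univ r), Finset.card_univ] at hlt
  have := Fintype.card_pos_iff.2 ⟨r⟩
  omega

end SimpleGraph

open SimpleGraph

section StarColoring

variable (n : ℕ) [NeZero n]

local notation "𝒞" n => centralGraph (starGraph (0 : Fin n))

/-- By truncated subtraction the center gets color `0`, like leaf `1`. -/
def starColoring : Fin n ⊕ (starGraph (0 : Fin n)).edgeSet → ℕ :=
  Sum.elim (fun i => (i : ℕ) - 1) (fun _ => n - 1)

variable {n}

lemma starColoring_lt (w : Fin n ⊕ (starGraph (0 : Fin n)).edgeSet) : starColoring n w < n := by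
  have := NeZero.pos n
  rcases w with i | _ <;> simp only [starColoring, Sum.elim_inl, Sum.elim_inr]
  · have := i.isLt
    omega
  · omega

lemma starColoring_inl_lt_inr (i : Fin n) (e : (starGraph (0 : Fin n)).edgeSet) :
    starColoring n (.inl i) < starColoring n (.inr e) := by
  obtain ⟨x, hx, -⟩ := exists_eq_mk_of_mem_edgeSet_starGraph e.2
  simp only [Ne, Fin.ext_iff, Fin.val_zero] at hx
  have := x.isLt
  have := i.isLt
  simp only [starColoring, Sum.elim_inl, Sum.elim_inr]
  omega

lemma eq_of_starColoring_eq {i j : Fin n} (hi : i ≠ 0)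
    (h : starColoring n (.inl j) = starColoring n (.inl i)) : j = i ∨ (j = 0 ∧ (i : ℕ) = 1) := by
  simp only [starColoring, Sum.elim_inl, Ne, Fin.ext_iff, Fin.val_zero] at h hi ⊢
  omega

lemma starColoring_proper :
    ∀ u v, (𝒞 n).Adj u v → starColoring n u ≠ starColoring n v
  | .inl _, .inl _, h => by
    obtain ⟨hij, hi, hj⟩ := centralGraph_starGraph_adj_inl_inl.1 h
    simp only [starColoring, Sum.elim_inl, Ne, Fin.ext_iff, Fin.val_zero] at hij hi hj ⊢
    omega
  | .inl i, .inr e, _ => (starColoring_inl_lt_inr i e).ne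
  | .inr e, .inl i, _ => (starColoring_inl_lt_inr i e).ne'

lemma starColoring_center_dominates (e : (starGraph (0 : Fin n)).edgeSet)
    (w : Fin n ⊕ (starGraph (0 : Fin n)).edgeSet) (hw : starColoring n w = starColoring n (.inr e)) :
    (𝒞 n).Adj (.inl 0) w := by
  rcases w with i | ⟨f, hf⟩
  · exact absurd hw (starColoring_inl_lt_inr _ e).ne
  · obtain ⟨x, -, rfl⟩ := exists_eq_mk_of_mem_edgeSet_starGraph hf
    exact centralGraph_adj_inl_inr.2 (Sym2.mem_mk_left _ _)

lemma starColoring_subdivision_dominates (e : (starGraph (0 : Fin n)).edgeSet) {x : Fin n}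
    (hx : x ≠ 0) (he : (e : Sym2 (Fin n)) = s(0, x)) (w : Fin n ⊕ (starGraph (0 : Fin n)).edgeSet)
    (hw : starColoring n w = starColoring n (.inl x)) : (𝒞 n).Adj (.inr e) w := by
  rcases w with v | f
  · rw [centralGraph_adj_inr_inl, he]
    rcases eq_of_starColoring_eq hx hw with rfl | ⟨rfl, -⟩
    · exact Sym2.mem_mk_right _ _
    · exact Sym2.mem_mk_left _ _
  · exact absurd hw (starColoring_inl_lt_inr x f).ne'

lemma starColoring_leaf_dominates_leaf {i j : Fin n} (hi : i ≠ 0) (hj : j ≠ 0) (hij : i ≠ j)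
    (hj1 : (j : ℕ) ≠ 1) (w : Fin n ⊕ (starGraph (0 : Fin n)).edgeSet)
    (hw : starColoring n w = starColoring n (.inl j)) : (𝒞 n).Adj (.inl i) w := by
  rcases w with v | f
  · obtain rfl : v = j := (eq_of_starColoring_eq hj hw).resolve_right fun h => hj1 h.2
    exact centralGraph_starGraph_adj_inl_inl.2 ⟨hij, hi, hj⟩
  · exact absurd hw (starColoring_inl_lt_inr j f).ne'

lemma starColoring_leaf_dominates_subdivision (hn : n = 2) {i : Fin n} (hi : i ≠ 0)
    (e : (starGraph (0 : Fin n)).edgeSet) (w : Fin n ⊕ (starGraph (0 : Fin n)).edgeSet)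
    (hw : starColoring n w = starColoring n (.inr e)) : (𝒞 n).Adj (.inl i) w := by
  rcases w with v | ⟨f, hf⟩
  · exact absurd hw (starColoring_inl_lt_inr _ e).ne
  · obtain ⟨x, hx, rfl⟩ := exists_eq_mk_of_mem_edgeSet_starGraph hf
    obtain rfl : x = i := by
      simp only [Ne, Fin.ext_iff, Fin.val_zero] at hx hi ⊢
      omega
    exact centralGraph_adj_inl_inr.2 (Sym2.mem_mk_right _ _)

lemma starColoring_dominating (hn : n = 2 ∨ 4 ≤ n) (v : Fin n ⊕ (starGraph (0 : Fin n)).edgeSet) :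
    ∃ c, (∃ w, starColoring n w = c) ∧ ∀ w, starColoring n w = c → (𝒞 n).Adj v w := by
  suffices ∃ w₀, ∀ w, starColoring n w = starColoring n w₀ → (𝒞 n).Adj v w by
    obtain ⟨w₀, h⟩ := this
    exact ⟨_, ⟨w₀, rfl⟩, h⟩
  obtain ⟨e⟩ := nonempty_edgeSet_starGraph (r := (0 : Fin n)) (x := ⟨1, by omega⟩)
    (by simp [Fin.ext_iff])
  rcases v with i | ⟨f, hf⟩
  · by_cases hi : i = 0
    · exact ⟨.inr e, hi ▸ starColoring_center_dominates e⟩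
    rcases hn with hn | hn
    · exact ⟨.inr e, starColoring_leaf_dominates_subdivision hn hi e⟩
    · obtain ⟨j, hj, hij, hj1⟩ : ∃ j : Fin n, j ≠ 0 ∧ i ≠ j ∧ (j : ℕ) ≠ 1 := by
        simp only [Ne, Fin.ext_iff, Fin.val_zero] at hi ⊢
        by_cases hi2 : (i : ℕ) = 2
        · exact ⟨⟨3, by omega⟩, by simp only; omega⟩
        · exact ⟨⟨2, by omega⟩, by simp only; omega⟩
      exact ⟨.inl j, starColoring_leaf_dominates_leaf hi hj hij hj1⟩
  · obtain ⟨x, hx, rfl⟩ := exists_eq_mk_of_mem_edgeSet_starGraph hf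
    exact ⟨.inl x, starColoring_subdivision_dominates _ hx rfl⟩

lemma isTDColoring_starColoring (hn : n = 2 ∨ 4 ≤ n) :
    IsTDColoring (𝒞 n) (starColoring n) :=
  ⟨starColoring_proper, starColoring_dominating hn⟩

end StarColoring

theorem exists_tdcn_central_eq_order (n : ℕ) (hn : n = 2 ∨ 4 ≤ n) :
    ∃ G : SimpleGraph (Fin n), G.Connected ∧ tdcn (centralGraph G) = n := by
  have : NeZero n := ⟨by omega⟩
  refine ⟨starGraph 0, connected_starGraph 0, IsLeast.csInf_eq ⟨?_, ?_⟩⟩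
  · exact ⟨starColoring n, isTDColoring_starColoring hn, starColoring_lt⟩
  · rintro k ⟨f, hf, hk⟩
    simpa using card_le_of_isTDColoring_centralGraph_starGraph hf hk
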